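/- In the king wire gadget with input signal 0 (the input king has budget 0), every normalized capturing sequence outputs a 0-king: no normalized capturing sequence can leave the output king with budget 1. -/

import Mathlib

/-- A configuration assigns to each square an optional budget (`none` = empty). -/
abbrev Config (V : Type) := V → Option ℕ

/-- Apply capture move `(x, y)`: the piece on `x` captures the piece on `y`,
moving to `y` with budget decreased by one. -/
def applyMove {V : Type} [DecidableEq V] (c : Config V) (m : V × V) : Config V :=
  fun z =>
    if z = m.2 then (c m.1).map (· - 1)
    else if z = m.1 then none
    else c z

/-- A move is valid if the squares are adjacent, the source piece has positive
budget, and the target square is occupied. -/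
def ValidMove {V : Type} (adj : V → V → Prop) (c : Config V) (m : V × V) : Prop :=
  adj m.1 m.2 ∧ (∃ b, c m.1 = some (b + 1)) ∧ (c m.2).isSome

def applySeq {V : Type} [DecidableEq V] (c : Config V) : List (V × V) → Config V
  | [] => c
  | m :: s => applySeq (applyMove c m) s

def ValidSeq {V : Type} [DecidableEq V] (adj : V → V → Prop) (c : Config V) :
    List (V × V) → Prop
  | [] => True
  | m :: s => ValidMove adj c m ∧ ValidSeq adj (applyMove c m) s

/-- `ConfigLE c c'`: same pieces on the same squares, with each budget in `c'`
at least the corresponding budget in `c`. -/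
def ConfigLE {V : Type} (c c' : Config V) : Prop :=
  ∀ v, ((c v).isSome ↔ (c' v).isSome) ∧
    ∀ b b', c v = some b → c' v = some b' → b ≤ b'

/-- A clearing sequence: valid and exactly one piece remains. -/
def Clears {V : Type} [DecidableEq V] (adj : V → V → Prop) (c : Config V)
    (s : List (V × V)) : Prop :=
  ValidSeq adj c s ∧ ∃! v, (applySeq c s v).isSome

/-- `f` is the final square of sequence `s` applied to `c`. -/
def FinalSquare {V : Type} [DecidableEq V] (c : Config V) (s : List (V × V)) (f : V) : Prop :=
  (applySeq c s f).isSome ∧ ∀ v, (applySeq c s v).isSome → v = f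

/-- A virtual 0-piece: occupied initially, and never moves during `s`. -/
def Virtual0 {V : Type} (c : Config V) (s : List (V × V)) (v : V) : Prop :=
  (c v).isSome ∧ ∀ m ∈ s, m.1 ≠ v

/-- A virtual 2-piece: occupied initially, and moves at some point during `s`. -/
def Virtual2 {V : Type} (c : Config V) (s : List (V × V)) (v : V) : Prop :=
  (c v).isSome ∧ ∃ m ∈ s, m.1 = v

/-- The capture graph of a configuration: vertices are squares, with an edge
between two occupied squares whose pieces can capture each other. -/
def captureGraph {V : Type} (adj : V → V → Prop) (hs : Symmetric adj) (c : Config V) :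
    SimpleGraph V where
  Adj x y := adj x y ∧ x ≠ y ∧ (c x).isSome ∧ (c y).isSome
  symm := by
    constructor
    intro x y h
    exact ⟨hs h.1, h.2.1.symm, h.2.2.2, h.2.2.1⟩
  loopless := by
    constructor
    intro x h
    exact h.2.1 rfl

/-- King adjacency on the integer board: distinct squares at Chebyshev
distance 1. -/
def kingAdj (p q : ℤ × ℤ) : Prop :=
  p ≠ q ∧ |p.1 - q.1| ≤ 1 ∧ |p.2 - q.2| ≤ 1

/-- The king wire with `k` interior columns and input budget `i`: an input king
of budget `i` at `(0,0)`, columns of two 2-kings at `x = 1, …, k` (rows 0 and 1),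
a connector column of three 2-kings at `x = k+1` (rows -1, 0, 1), and the output
2-king at `(k+2, 0)`. -/
def kingWire (k : ℕ) (i : ℕ) : Config (ℤ × ℤ) := fun p =>
  if p = (0, 0) then some i
  else if 1 ≤ p.1 ∧ p.1 ≤ (k : ℤ) ∧ (p.2 = 0 ∨ p.2 = 1) then some 2
  else if p.1 = (k : ℤ) + 1 ∧ (p.2 = -1 ∨ p.2 = 0 ∨ p.2 = 1) then some 2
  else if p = ((k : ℤ) + 2, 0) then some 2
  else none

/-! Give every piece weight `budget - 1`. A capture by a piece of budget `b + 1` removes its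
weight `b` and replaces the target's weight by `b - 1`, so the total weight, the surplus, drops by exactly
the budget of the captured piece. Pieces cannot jump columns, so clearing the wire towards the
output captures on every column `1, …, k + 2`, each time a 2-king that has not been touched yet.
The surplus therefore drops by at least `2 (k + 2)`; it starts at `i + 2k + 3` and ends at
`b - 1` for an output king of budget `b`, whence `b ≤ i`. -/

section Surplus

variable {V : Type} [DecidableEq V] {adj : V → V → Prop}

def budgetExcess : Option ℕ → ℤ
  | none => 0
  | some b => b - 1

def surplus (S : Finset V) (c : Config V) : ℤ :=
  ∑ q ∈ S, budgetExcess (c q)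

lemma applyMove_of_ne {c : Config V} {m : V × V} {q : V} (h1 : q ≠ m.1) (h2 : q ≠ m.2) :
    applyMove c m q = c q := by
  simp [applyMove, h1, h2]

lemma applyMove_fst {c : Config V} {m : V × V} (h : m.1 ≠ m.2) : applyMove c m m.1 = none := by
  simp [applyMove, h]

lemma applyMove_snd (c : Config V) (m : V × V) : applyMove c m m.2 = (c m.1).map (· - 1) := by
  simp [applyMove]

lemma isSome_of_isSome_applyMove {c : Config V} {m : V × V} {q : V} (ht : (c m.2).isSome)
    (hq : (applyMove c m q).isSome) : (c q).isSome := by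
  by_cases h2 : q = m.2
  · exact h2 ▸ ht
  by_cases h1 : q = m.1
  · rw [h1, applyMove_fst (h1 ▸ h2)] at hq
    exact absurd hq (by simp)
  · rwa [applyMove_of_ne h1 h2] at hq

lemma surplus_eq_surplus_applyMove_add {S : Finset V} {c : Config V} {m : V × V}
    (hm : ValidMove adj c m) (hne : m.1 ≠ m.2) (h1 : m.1 ∈ S) (h2 : m.2 ∈ S) :
    surplus S c = surplus S (applyMove c m) + (c m.2).getD 0 := by
  obtain ⟨-, ⟨b, hb⟩, ht⟩ := hm
  obtain ⟨β, hβ⟩ := Option.isSome_iff_exists.mp ht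
  have hdiff : surplus S c - surplus S (applyMove c m) =
      (budgetExcess (c m.1) - budgetExcess (applyMove c m m.1)) +
        (budgetExcess (c m.2) - budgetExcess (applyMove c m m.2)) := by
    rw [surplus, surplus, ← Finset.sum_sub_distrib]
    exact Finset.sum_eq_add_of_mem _ _ h1 h2 hne
      fun q _ hq => by rw [applyMove_of_ne hq.1 hq.2, sub_self]
  simp [applyMove, hne, hb, hβ, budgetExcess] at hdiff ⊢
  linarith

theorem surplus_applySeq_add_le {ι : Type} [DecidableEq ι] (hne : ∀ x y, adj x y → x ≠ y)
    (col : V → ι) (r : ℕ) {S : Finset V} :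
    ∀ {c : Config V} {s : List (V × V)} {J : Finset ι}, ValidSeq adj c s →
      (∀ q, (c q).isSome → q ∈ S) → (∀ q b, col q ∈ J → c q = some b → r ≤ b) →
      (∀ j ∈ J, ∃ m ∈ s, col m.2 = j) →
      surplus S (applySeq c s) + r * J.card ≤ surplus S c
  | c, [], J, _, _, _, hJ => by
    obtain rfl : J = ∅ := Finset.eq_empty_of_forall_notMem fun j hj => by simpa using hJ j hj
    simp [applySeq]
  | c, m :: s, J, ⟨hm, hs⟩, hS, hr, hJ => by
    obtain ⟨b, hb⟩ := hm.2.1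
    have hstep := surplus_eq_surplus_applyMove_add hm (hne _ _ hm.1) (hS _ (by simp [hb]))
      (hS _ hm.2.2)
    have hrest := surplus_applySeq_add_le hne col r (c := applyMove c m) (s := s)
      (J := J.erase (col m.2)) hs
      (fun q hq => hS q (isSome_of_isSome_applyMove hm.2.2 hq))
      (fun q b hq hb => by
        obtain ⟨hqm, hqJ⟩ := Finset.mem_erase.mp hq
        have h2 : q ≠ m.2 := fun h => hqm (h ▸ rfl)
        by_cases h1 : q = m.1
        · rw [h1, applyMove_fst (h1 ▸ h2)] at hb
          exact absurd hb (by simp)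
        · exact hr q b hqJ (by rwa [applyMove_of_ne h1 h2] at hb))
      (fun j hj => by
        obtain ⟨hjm, hjJ⟩ := Finset.mem_erase.mp hj
        obtain ⟨m', hm', rfl⟩ := hJ j hjJ
        rcases List.mem_cons.mp hm' with rfl | hm'
        · exact absurd rfl hjm
        · exact ⟨m', hm', rfl⟩)
    rw [applySeq]
    by_cases hmJ : col m.2 ∈ J
    · obtain ⟨β, hβ⟩ := Option.isSome_iff_exists.mp hm.2.2
      have hβr := hr _ β hmJ hβ
      rw [hβ, Option.getD_some] at hstep
      rw [← Finset.card_erase_add_one hmJ]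
      push_cast
      nlinarith
    · rw [Finset.erase_eq_of_notMem hmJ] at hrest
      have : (0 : ℤ) ≤ (c m.2).getD 0 := by positivity
      linarith

lemma exists_isSome_applySeq_of_forall_ne (col : V → ℤ)
    (hcol : ∀ x y, adj x y → col y ≤ col x + 1) (j : ℤ) :
    ∀ {c : Config V} {s : List (V × V)}, ValidSeq adj c s → (∀ m ∈ s, col m.2 ≠ j) →
      (∃ p, col p < j ∧ (c p).isSome) → ∃ p, col p < j ∧ (applySeq c s p).isSome
  | _, [], _, _, h => h
  | c, m :: s, ⟨⟨hadj, ⟨b, hb⟩, _⟩, hs⟩, hj, ⟨p, hp, hpc⟩ => by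
    refine exists_isSome_applySeq_of_forall_ne col hcol j (c := applyMove c m) (s := s) hs
      (fun m' hm' => hj m' (List.mem_cons_of_mem _ hm')) ?_
    have hmj := hj m List.mem_cons_self
    by_cases hsrc : col m.1 < j
    · exact ⟨m.2, by have := hcol _ _ hadj; omega, by simp [applyMove_snd, hb]⟩
    · by_cases hp2 : p = m.2
      · exact ⟨p, hp, by simp [hp2, applyMove_snd, hb]⟩
      · have hp1 : p ≠ m.1 := fun h => hsrc (h ▸ hp)
        exact ⟨p, hp, by rwa [applyMove_of_ne hp1 hp2]⟩

end Surplus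

section KingWire

lemma kingAdj_ne {p q : ℤ × ℤ} (h : kingAdj p q) : p ≠ q := h.1

lemma kingAdj_fst_le {p q : ℤ × ℤ} (h : kingAdj p q) : q.1 ≤ p.1 + 1 := by
  have := abs_le.mp h.2.1
  omega

noncomputable def wireSupp (k : ℕ) : Finset (ℤ × ℤ) :=
  insert (0, 0) (Finset.Icc 1 (k : ℤ) ×ˢ {0, 1} ∪
    {((k : ℤ) + 1, -1), ((k : ℤ) + 1, 0), ((k : ℤ) + 1, 1), ((k : ℤ) + 2, 0)})

lemma mem_wireSupp_of_isSome {k i : ℕ} {q : ℤ × ℤ} (hq : (kingWire k i q).isSome) :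
    q ∈ wireSupp k := by
  obtain ⟨x, y⟩ := q
  unfold kingWire at hq
  split_ifs at hq <;> simp_all [wireSupp]

lemma kingWire_eq_two {k i : ℕ} {q : ℤ × ℤ} (h1 : 1 ≤ q.1) (hq : (kingWire k i q).isSome) :
    kingWire k i q = some 2 := by
  unfold kingWire at hq ⊢
  split_ifs at hq ⊢ <;> simp_all

lemma card_wireSupp (k : ℕ) : (wireSupp k).card = 2 * k + 5 := by
  have hdisj : Disjoint (Finset.Icc 1 (k : ℤ) ×ˢ ({0, 1} : Finset ℤ))
      {((k : ℤ) + 1, -1), ((k : ℤ) + 1, 0), ((k : ℤ) + 1, 1), ((k : ℤ) + 2, 0)} := by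
    simp [Finset.disjoint_left, Prod.ext_iff]
    omega
  rw [wireSupp, Finset.card_insert_of_notMem (by simp [Prod.ext_iff]; omega),
    Finset.card_union_of_disjoint hdisj, Finset.card_product, Int.card_Icc]
  simp
  omega

lemma surplus_kingWire (k i : ℕ) : surplus (wireSupp k) (kingWire k i) = i + 2 * k + 3 := by
  have hrest : ∀ q ∈ (wireSupp k).erase (0, 0), budgetExcess (kingWire k i q) = 1 := by
    rintro ⟨x, y⟩ hq
    simp only [wireSupp, Finset.mem_erase, Finset.mem_insert, Finset.mem_union,
      Finset.mem_product, Finset.mem_Icc, Finset.mem_singleton, Prod.ext_iff] at hq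
    unfold kingWire
    split_ifs <;> simp_all [Prod.ext_iff, budgetExcess] <;> omega
  have h00 : ((0 : ℤ), (0 : ℤ)) ∈ wireSupp k := by simp [wireSupp]
  rw [surplus, ← Finset.add_sum_erase _ _ h00, Finset.sum_congr rfl hrest, Finset.sum_const,
    Finset.card_erase_of_mem h00, card_wireSupp]
  simp [kingWire, budgetExcess]
  ring

theorem le_of_applySeq_kingWire_output {k i b : ℕ} {s : List ((ℤ × ℤ) × (ℤ × ℤ))}
    (hvalid : ValidSeq kingAdj (kingWire k i) s)
    (hnorm : ∀ p : ℤ × ℤ, p ≠ ((k : ℤ) + 2, 0) → applySeq (kingWire k i) s p = none)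
    (hout : applySeq (kingWire k i) s ((k : ℤ) + 2, 0) = some b) :
    b ≤ i := by
  have hcols : ∀ j ∈ Finset.Icc 1 ((k : ℤ) + 2), ∃ m ∈ s, m.2.1 = j := by
    intro j hj
    rw [Finset.mem_Icc] at hj
    by_contra! hnot
    obtain ⟨p, hpj, hp⟩ := exists_isSome_applySeq_of_forall_ne Prod.fst
      (fun _ _ => kingAdj_fst_le) j hvalid hnot ⟨(0, 0), by simp; omega, by simp [kingWire]⟩
    rw [hnorm p (by rintro rfl; simp at hpj; omega)] at hp
    exact absurd hp (by simp)
  have hdrop := surplus_applySeq_add_le (S := wireSupp k) (fun _ _ => kingAdj_ne) Prod.fst 2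
    hvalid (fun _ => mem_wireSupp_of_isSome)
    (fun q b hq hb => (Option.some_injective _ (hb ▸ kingWire_eq_two
      (Finset.mem_Icc.mp hq).1 (by simp [hb]))).ge)
    hcols
  have hend : surplus (wireSupp k) (applySeq (kingWire k i) s) = b - 1 := by
    rw [surplus, Finset.sum_eq_single_of_mem ((k : ℤ) + 2, 0) (by simp [wireSupp])
      fun q _ hq => by rw [hnorm q hq]; rfl, hout]
    rfl
  rw [hend, surplus_kingWire, Int.card_Icc] at hdrop
  omega

end KingWire

theorem king_wire_zero_input_general (k : ℕ)
    (s : List ((ℤ × ℤ) × (ℤ × ℤ)))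
    (hvalid : ValidSeq kingAdj (kingWire k 0) s)
    (hnorm : ∀ p : ℤ × ℤ, p ≠ ((k : ℤ) + 2, 0) → applySeq (kingWire k 0) s p = none)
    (hout : (applySeq (kingWire k 0) s ((k : ℤ) + 2, 0)).isSome) :
    applySeq (kingWire k 0) s ((k : ℤ) + 2, 0) = some 0 := by
  obtain ⟨b, hb⟩ := Option.isSome_iff_exists.mp hout
  rw [hb, Nat.le_zero.mp (le_of_applySeq_kingWire_output hvalid hnorm hb)]

/-- **The king wire with input 0 outputs 0.** Every normalized capturing
sequence of the king wire (one clearing everything except the output square)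
with input budget 0 leaves a king of budget 0 on the output square. -/
theorem king_wire_zero_input (k : ℕ) (hk : 1 ≤ k)
    (s : List ((ℤ × ℤ) × (ℤ × ℤ)))
    (hvalid : ValidSeq kingAdj (kingWire k 0) s)
    (hnorm : ∀ p : ℤ × ℤ, p ≠ ((k : ℤ) + 2, 0) → applySeq (kingWire k 0) s p = none)
    (hout : (applySeq (kingWire k 0) s ((k : ℤ) + 2, 0)).isSome) :
    applySeq (kingWire k 0) s ((k : ℤ) + 2, 0) = some 0 :=
  king_wire_zero_input_general k s hvalid hnorm hout
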